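/- arXiv:1705.04825 — 2 statements merged into one kernel-verified Lean document; each statement's English description precedes it below -/
import Mathlib

section
/- For positive definite matrices X, A and t ≥ 0, the operator norm of the t-weighted geometric mean satisfies ‖X #_t A‖ ≤ ‖X‖ · ‖X⁻¹‖^t · ‖A‖^t. -/
open MeasureTheory
open scoped ComplexOrder

abbrev Mat (m : ℕ) := Matrix (Fin m) (Fin m) ℂ

noncomputable instance {m : ℕ} : MeasurableSpace (Mat m) := borel _
instance {m : ℕ} : BorelSpace (Mat m) := ⟨rfl⟩

/-- Functional calculus on Hermitian matrices (junk value `A` otherwise). -/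
noncomputable def matFun {m : ℕ} (f : ℝ → ℝ) (A : Mat m) : Mat m :=
  if h : A.IsHermitian then
    (h.eigenvectorUnitary : Mat m) *
      Matrix.diagonal (fun i => (f (h.eigenvalues i) : ℂ)) *
      star (h.eigenvectorUnitary : Mat m)
  else A

/-- Real power `A^t` of a positive definite matrix, via the spectral decomposition. -/
noncomputable def mpow {m : ℕ} (A : Mat m) (t : ℝ) : Mat m := matFun (fun x => x ^ t) A

/-- Logarithm of a positive definite matrix, via the spectral decomposition. -/
noncomputable def mlog {m : ℕ} (A : Mat m) : Mat m := matFun Real.log A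

/-- The operator norm of a matrix (acting on the Euclidean space). -/
noncomputable def opN {m : ℕ} (A : Mat m) : ℝ :=
  ‖(Matrix.toEuclideanCLM (𝕜 := ℂ) A : EuclideanSpace ℂ (Fin m) →L[ℂ] EuclideanSpace ℂ (Fin m))‖

/-- The Frobenius (Hilbert-Schmidt) norm of a matrix. -/
noncomputable def fnorm {m : ℕ} (A : Mat m) : ℝ :=
  Real.sqrt (∑ i, ∑ j, ‖A i j‖ ^ 2)

/-- The Riemannian trace metric distance `d(A,B) = ‖log (A^{-1/2} B A^{-1/2})‖₂`. -/
noncomputable def rdist {m : ℕ} (A B : Mat m) : ℝ :=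
  fnorm (mlog (mpow A (-(1/2 : ℝ)) * B * mpow A (-(1/2 : ℝ))))

/-- The `t`-weighted geometric mean `X #_t A = X^{1/2} (X^{-1/2} A X^{-1/2})^t X^{1/2}`. -/
noncomputable def geom {m : ℕ} (X : Mat m) (t : ℝ) (A : Mat m) : Mat m :=
  mpow X (1/2 : ℝ) * mpow (mpow X (-(1/2 : ℝ)) * A * mpow X (-(1/2 : ℝ))) t * mpow X (1/2 : ℝ)

/-- Finite first moment for a measure on positive definite matrices. -/
def HasFFM {m : ℕ} (μ : Measure (Mat m)) : Prop :=
  ∃ Y : Mat m, Y.PosDef ∧ Integrable (fun A => rdist A Y) μ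

/-- Couplings of two probability measures. -/
def couplings {m : ℕ} (μ ν : Measure (Mat m)) : Set (Measure (Mat m × Mat m)) :=
  {π | IsProbabilityMeasure π ∧ π.map Prod.fst = μ ∧ π.map Prod.snd = ν}

/-- The 1-Wasserstein distance with respect to the Riemannian trace metric. -/
noncomputable def W1 {m : ℕ} (μ ν : Measure (Mat m)) : ℝ :=
  sInf ((fun π : Measure (Mat m × Mat m) => ∫ p, rdist p.1 p.2 ∂π) '' couplings μ ν)

/-!
Write `X #_t A = S * M ^ t * S` with `S = X ^ (1/2)` and `M = X ^ (-1/2) * A * X ^ (-1/2)`.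
Submultiplicativity gives `‖S M^t S‖ ≤ ‖S‖² ‖M^t‖`, and the isometric functional calculus of a
C⋆-algebra gives `‖S‖² = ‖X‖`, `‖M^t‖ ≤ ‖M‖^t` and `‖X^(-1/2)‖² = ‖X⁻¹‖`, hence
`‖M‖ ≤ ‖X⁻¹‖ ‖A‖`. For Hermitian matrices `matFun` is Mathlib's `cfc`, so the theorem is the case
of matrices with the `L²` operator norm.
-/

lemma norm_mul_mul_self_le {R : Type*} [SeminormedRing R] (s b : R) :
    ‖s * b * s‖ ≤ ‖s‖ ^ 2 * ‖b‖ :=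
  calc ‖s * b * s‖ ≤ ‖s‖ * ‖b‖ * ‖s‖ := norm_mul₃_le
    _ = ‖s‖ ^ 2 * ‖b‖ := by ring

namespace CFC

variable {A : Type*} [CStarAlgebra A] [PartialOrder A] [StarOrderedRing A]

lemma norm_rpow_le (a : A) {t : ℝ} (ht : 0 ≤ t) (ha : 0 ≤ a := by cfc_tac) :
    ‖a ^ t‖ ≤ ‖a‖ ^ t := by
  rcases ht.eq_or_lt with rfl | ht
  · rw [rpow_zero a, Real.rpow_zero]
    rcases subsingleton_or_nontrivial A with _ | _
    · simp [Subsingleton.elim (1 : A) 0]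
    · exact CStarRing.norm_one.le
  · exact (norm_rpow a ht).le

lemma norm_rpow_half_sq (a : A) (ha : 0 ≤ a := by cfc_tac) : ‖a ^ (1 / 2 : ℝ)‖ ^ 2 = ‖a‖ := by
  rw [← sqrt_eq_rpow, norm_sqrt a, Real.sq_sqrt (norm_nonneg a)]

lemma rpow_neg_eq_inverse_rpow {x : A} (hx : IsStrictlyPositive x) (y : ℝ) :
    x ^ (-y) = Ring.inverse x ^ y := by
  obtain ⟨u, rfl⟩ := hx.isUnit
  rw [Ring.inverse_unit, rpow_neg u]

theorem norm_geomMean_le {x a : A} (hx : IsStrictlyPositive x) (ha : 0 ≤ a) {t : ℝ}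
    (ht : 0 ≤ t) :
    ‖x ^ (1 / 2 : ℝ) * (x ^ (-(1 / 2) : ℝ) * a * x ^ (-(1 / 2) : ℝ)) ^ t * x ^ (1 / 2 : ℝ)‖ ≤
      ‖x‖ * ‖Ring.inverse x‖ ^ t * ‖a‖ ^ t := by
  have hM : ‖x ^ (-(1 / 2) : ℝ) * a * x ^ (-(1 / 2) : ℝ)‖ ≤ ‖Ring.inverse x‖ * ‖a‖ := by
    calc _ ≤ ‖x ^ (-(1 / 2) : ℝ)‖ ^ 2 * ‖a‖ := norm_mul_mul_self_le _ _
      _ = ‖Ring.inverse x‖ * ‖a‖ := by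
        rw [rpow_neg_eq_inverse_rpow hx, norm_rpow_half_sq _ hx.ringInverse.nonneg]
  calc _ ≤ ‖x ^ (1 / 2 : ℝ)‖ ^ 2 * ‖(x ^ (-(1 / 2) : ℝ) * a * x ^ (-(1 / 2) : ℝ)) ^ t‖ :=
        norm_mul_mul_self_le _ _
    _ ≤ ‖x‖ * ‖x ^ (-(1 / 2) : ℝ) * a * x ^ (-(1 / 2) : ℝ)‖ ^ t := by
        rw [norm_rpow_half_sq x]
        gcongr
        exact norm_rpow_le _ ht
    _ ≤ ‖x‖ * (‖Ring.inverse x‖ * ‖a‖) ^ t := by gcongr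
    _ = ‖x‖ * ‖Ring.inverse x‖ ^ t * ‖a‖ ^ t := by
        rw [Real.mul_rpow (norm_nonneg _) (norm_nonneg _), mul_assoc]

end CFC

open scoped Matrix.Norms.L2Operator MatrixOrder

lemma matFun_eq_cfc {m : ℕ} {A : Mat m} (hA : A.IsHermitian) (f : ℝ → ℝ) :
    matFun f A = cfc f A := by
  rw [hA.cfc_eq, Matrix.IsHermitian.cfc, Unitary.conjStarAlgAut_apply, matFun, dif_pos hA]
  rfl

lemma mpow_eq_rpow {m : ℕ} {A : Mat m} (hA : A.PosSemidef) (t : ℝ) : mpow A t = A ^ t := by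
  rw [mpow, matFun_eq_cfc hA.1, CFC.rpow_eq_cfc_real hA.nonneg]

/-- `‖X #_t A‖ ≤ ‖X‖ ‖X⁻¹‖^t ‖A‖^t` for positive definite `X, A` and `t ≥ 0`. -/
theorem stmt1 {m : ℕ} (X A : Mat m) (hX : X.PosDef) (hA : A.PosDef) (t : ℝ) (ht : 0 ≤ t) :
    opN (geom X t A) ≤ opN X * opN X⁻¹ ^ t * opN A ^ t := by
  have hM : (X ^ (-(1 / 2) : ℝ) * A * X ^ (-(1 / 2) : ℝ)).PosSemidef :=
    Matrix.nonneg_iff_posSemidef.mp <|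
      conjugate_nonneg_of_nonneg hA.posSemidef.nonneg CFC.rpow_nonneg
  have hgeom : geom X t A =
      X ^ (1 / 2 : ℝ) * (X ^ (-(1 / 2) : ℝ) * A * X ^ (-(1 / 2) : ℝ)) ^ t * X ^ (1 / 2 : ℝ) := by
    rw [geom, mpow_eq_rpow hX.posSemidef, mpow_eq_rpow hX.posSemidef, mpow_eq_rpow hM]
  rw [opN, opN, opN, opN, hgeom, Matrix.nonsing_inv_eq_ringInverse]
  exact CFC.norm_geomMean_le hX.isStrictlyPositive hA.posSemidef.nonneg ht
end

section
/- For positive definite matrices X, A and t ≥ 0, the inverse of the weighted geometric mean satisfies ‖(X #_t A)⁻¹‖ ≤ ‖X⁻¹‖ · ‖X‖^t · ‖A⁻¹‖^t. -/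
open MeasureTheory
open scoped ComplexOrder

/-
Write `M = X^{-1/2} A X^{-1/2}`, so that `(X #_t A)⁻¹ = X^{-1/2} M^{-t} X^{-1/2}` and
`M⁻¹ = X^{1/2} A⁻¹ X^{1/2}`. For a self-adjoint `S` in a C*-algebra, `‖S B S‖ ≤ ‖S S‖ ‖B‖`,
which bounds `‖(X #_t A)⁻¹‖` by `‖X⁻¹‖ ‖M^{-t}‖` and `‖M⁻¹‖` by `‖X‖ ‖A⁻¹‖`. Finally
`‖M^{-t}‖ ≤ ‖M⁻¹‖^t`, because the spectral norm of a function of a Hermitian matrix is the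
largest modulus of its values on the eigenvalues.
-/

open scoped Matrix.Norms.L2Operator

section MatFun

variable {m : ℕ}

lemma matFun_of_isHermitian {A : Mat m} (hA : A.IsHermitian) (f : ℝ → ℝ) :
    matFun f A = (hA.eigenvectorUnitary : Mat m) *
      Matrix.diagonal (fun i => (f (hA.eigenvalues i) : ℂ)) *
      star (hA.eigenvectorUnitary : Mat m) :=
  dif_pos hA

lemma matFun_congr {A : Mat m} (hA : A.IsHermitian) {f g : ℝ → ℝ}
    (h : ∀ i, f (hA.eigenvalues i) = g (hA.eigenvalues i)) :
    matFun f A = matFun g A := by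
  simp only [matFun_of_isHermitian hA, h]

lemma isHermitian_matFun {A : Mat m} (hA : A.IsHermitian) (f : ℝ → ℝ) :
    (matFun f A).IsHermitian := by
  rw [matFun_of_isHermitian hA, Matrix.star_eq_conjTranspose]
  refine Matrix.isHermitian_mul_mul_conjTranspose _ <|
    Matrix.isHermitian_diagonal_of_self_adjoint _ ?_
  ext i
  simp

lemma matFun_mul_matFun {A : Mat m} (hA : A.IsHermitian) (f g : ℝ → ℝ) :
    matFun f A * matFun g A = matFun (fun x => f x * g x) A := by
  have hU : star (hA.eigenvectorUnitary : Mat m) * (hA.eigenvectorUnitary : Mat m) = 1 :=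
    Unitary.coe_star_mul_self _
  simp only [matFun_of_isHermitian hA, mul_assoc]
  rw [← mul_assoc (star _) (hA.eigenvectorUnitary : Mat m), hU, one_mul,
    ← mul_assoc (Matrix.diagonal _), Matrix.diagonal_mul_diagonal]
  simp

lemma norm_matFun {A : Mat m} (hA : A.IsHermitian) (f : ℝ → ℝ) :
    ‖matFun f A‖ = ‖fun i => (f (hA.eigenvalues i) : ℂ)‖ := by
  rw [matFun_of_isHermitian hA, ← Unitary.coe_star, CStarRing.norm_mul_coe_unitary,
    CStarRing.norm_coe_unitary_mul, Matrix.l2_opNorm_diagonal]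

end MatFun

section MPow

variable {m : ℕ} {A : Mat m}

lemma isHermitian_mpow (hA : A.IsHermitian) (a : ℝ) : (mpow A a).IsHermitian :=
  isHermitian_matFun hA _

lemma mpow_zero (hA : A.IsHermitian) : mpow A 0 = 1 := by
  rw [mpow, matFun_of_isHermitian hA]
  simp only [Real.rpow_zero, Complex.ofReal_one, Matrix.diagonal_one, mul_one]
  exact Unitary.coe_mul_star_self _

lemma mpow_one (hA : A.IsHermitian) : mpow A 1 = A := by
  rw [mpow, matFun_congr hA (g := id) fun i => Real.rpow_one _, matFun_of_isHermitian hA]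
  exact hA.spectral_theorem.symm

lemma mpow_add (hA : A.PosDef) (a b : ℝ) : mpow A (a + b) = mpow A a * mpow A b := by
  rw [mpow, mpow, mpow, matFun_mul_matFun hA.1]
  exact matFun_congr hA.1 fun i => Real.rpow_add (hA.eigenvalues_pos i) a b

lemma mpow_mul_mpow_neg (hA : A.PosDef) (a : ℝ) : mpow A a * mpow A (-a) = 1 := by
  rw [← mpow_add hA, add_neg_cancel, mpow_zero hA.1]

lemma inv_mpow (hA : A.PosDef) (a : ℝ) : (mpow A a)⁻¹ = mpow A (-a) :=
  Matrix.inv_eq_right_inv (mpow_mul_mpow_neg hA a)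

lemma mpow_neg_one (hA : A.PosDef) : mpow A (-1) = A⁻¹ := by
  rw [← inv_mpow hA, mpow_one hA.1]

lemma posDef_mpow_mul_mul_mpow {B : Mat m} (hA : A.PosDef) (hB : B.PosDef) (a : ℝ) :
    (mpow A a * B * mpow A a).PosDef := by
  have hinj : Function.Injective (mpow A a).mulVec :=
    Matrix.mulVec_injective_iff_isUnit.mpr (.of_mul_eq_one _ (mpow_mul_mpow_neg hA a))
  simpa only [(isHermitian_mpow hA.1 a).eq] using hB.conjTranspose_mul_mul_same hinj

lemma norm_mpow_mul_le (hA : A.PosDef) (a : ℝ) {t : ℝ} (ht : 0 ≤ t) :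
    ‖mpow A (a * t)‖ ≤ ‖mpow A a‖ ^ t := by
  rw [mpow, mpow, norm_matFun hA.1, norm_matFun hA.1]
  refine (pi_norm_le_iff_of_nonneg (by positivity)).mpr fun i => ?_
  have hev := (hA.eigenvalues_pos i).le
  set v := fun i => ((hA.1.eigenvalues i ^ a : ℝ) : ℂ)
  have hvi : ‖v i‖ = hA.1.eigenvalues i ^ a := by
    rw [Complex.norm_real, Real.norm_of_nonneg (Real.rpow_nonneg hev a)]
  calc ‖((hA.1.eigenvalues i ^ (a * t) : ℝ) : ℂ)‖ = ‖v i‖ ^ t := by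
        rw [hvi, Complex.norm_real, Real.norm_of_nonneg (Real.rpow_nonneg hev _),
          Real.rpow_mul hev]
    _ ≤ ‖v‖ ^ t := by gcongr; exact norm_le_pi_norm v i

end MPow

lemma IsSelfAdjoint.norm_mul_mul_self_le {E : Type*} [NonUnitalNormedRing E] [StarRing E]
    [CStarRing E] {s : E} (hs : IsSelfAdjoint s) (b : E) :
    ‖s * b * s‖ ≤ ‖s * s‖ * ‖b‖ := by
  rw [hs.norm_mul_self]
  calc ‖s * b * s‖ ≤ ‖s‖ * ‖b‖ * ‖s‖ := norm_mul₃_le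
    _ = ‖s‖ ^ 2 * ‖b‖ := by ring

lemma inv_mpow_mul_mul_mpow {m : ℕ} {X : Mat m} (hX : X.PosDef) (B : Mat m) (a : ℝ) :
    (mpow X a * B * mpow X a)⁻¹ = mpow X (-a) * B⁻¹ * mpow X (-a) := by
  rw [Matrix.mul_inv_rev, Matrix.mul_inv_rev, inv_mpow hX, mul_assoc]

lemma inv_geom {m : ℕ} {X A : Mat m} (hX : X.PosDef) (hA : A.PosDef) (t : ℝ) :
    (geom X t A)⁻¹ = mpow X (-(1/2)) * mpow (mpow X (-(1/2)) * A * mpow X (-(1/2))) (-t) *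
      mpow X (-(1/2)) := by
  rw [geom, inv_mpow_mul_mul_mpow hX, inv_mpow (posDef_mpow_mul_mul_mpow hX hA _)]

/-- `‖(X #_t A)⁻¹‖ ≤ ‖X⁻¹‖ ‖X‖^t ‖A⁻¹‖^t` for positive definite `X, A` and `t ≥ 0`. -/
theorem stmt2 {m : ℕ} (X A : Mat m) (hX : X.PosDef) (hA : A.PosDef) (t : ℝ) (ht : 0 ≤ t) :
    opN (geom X t A)⁻¹ ≤ opN X⁻¹ * opN X ^ t * opN A⁻¹ ^ t := by
  set M := mpow X (-(1/2)) * A * mpow X (-(1/2))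
  have hM : M.PosDef := posDef_mpow_mul_mul_mpow hX hA _
  have hsqrt : mpow X (1/2) * mpow X (1/2) = X := by
    rw [← mpow_add hX, add_halves, mpow_one hX.1]
  have hsqrt_inv : mpow X (-(1/2)) * mpow X (-(1/2)) = X⁻¹ := by
    rw [← mpow_add hX, ← neg_add, add_halves, mpow_neg_one hX]
  have hMinv_le : ‖M⁻¹‖ ≤ ‖X‖ * ‖A⁻¹‖ := by
    rw [inv_mpow_mul_mul_mpow hX, neg_neg]
    calc _ ≤ ‖mpow X (1/2) * mpow X (1/2)‖ * ‖A⁻¹‖ :=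
          (isHermitian_mpow hX.1 _).isSelfAdjoint.norm_mul_mul_self_le _
      _ = ‖X‖ * ‖A⁻¹‖ := by rw [hsqrt]
  calc opN (geom X t A)⁻¹ = ‖mpow X (-(1/2)) * mpow M (-1 * t) * mpow X (-(1/2))‖ := by
        rw [inv_geom hX hA, neg_one_mul]; rfl
    _ ≤ ‖X⁻¹‖ * ‖mpow M (-1)‖ ^ t := by
        rw [← hsqrt_inv]
        grw [(isHermitian_mpow hX.1 _).isSelfAdjoint.norm_mul_mul_self_le,
          norm_mpow_mul_le hM (-1) ht]
    _ ≤ ‖X⁻¹‖ * (‖X‖ * ‖A⁻¹‖) ^ t := by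
        rw [mpow_neg_one hM]
        gcongr
    _ = opN X⁻¹ * opN X ^ t * opN A⁻¹ ^ t := by
        rw [Real.mul_rpow (norm_nonneg _) (norm_nonneg _), ← mul_assoc]; rfl
end
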